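/- arXiv:2603.10368 — 4 statements merged into one kernel-verified Lean document; each statement's English description precedes it below -/
import Mathlib

section
/- Let X be a type, n a natural number, σ a permutation of Fin n, and f : Fin n → X → X a family of self-maps of X. Let F be the σ-twisted product of f. Then F has a fixed point in (Fin n → X) if and only if for every i : Fin n and every integer r ≥ 1 with σ^r i = i, the cycle composition at i of length r has a fixed point in X. -/
/-- The `σ`-twisted product of a family of self-maps `f : Fin n → X → X`:
the self-map `F` of `Fin n → X` determined by `F x (σ i) = f i (x i)`. -/
def twistedProd {X : Type*} {n : ℕ} (σ : Equiv.Perm (Fin n)) (f : Fin n → X → X)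
    (x : Fin n → X) : Fin n → X :=
  fun j => f (σ⁻¹ j) (x (σ⁻¹ j))

/-- The cycle composition at `i` of length `r`:
`f (σ^(r-1) i) ∘ ⋯ ∘ f (σ i) ∘ f i`. -/
def cycComp {X : Type*} {n : ℕ} (σ : Equiv.Perm (Fin n)) (f : Fin n → X → X)
    (i : Fin n) : ℕ → X → X
  | 0 => id
  | (r + 1) => f ((σ ^ r) i) ∘ cycComp σ f i r

lemma cycComp_fixed_aux {X : Type*} {n : ℕ} (σ : Equiv.Perm (Fin n)) (f : Fin n → X → X)
    (x : Fin n → X) (hx : ∀ i, f i (x i) = x (σ i)) (i : Fin n) (r : ℕ) :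
    cycComp σ f i r (x i) = x ((σ ^ r) i) := by
  induction r with
  | zero => simp [cycComp]
  | succ r ih =>
    simp only [cycComp, Function.comp_apply, ih, hx, pow_succ']
    rw [Equiv.Perm.mul_apply]

theorem twistedProd_has_fixed_point_iff {X : Type*} {n : ℕ}
    (σ : Equiv.Perm (Fin n)) (f : Fin n → X → X) :
    (∃ x : Fin n → X, twistedProd σ f x = x) ↔
      ∀ (i : Fin n) (r : ℕ), 1 ≤ r → (σ ^ r) i = i →
        ∃ y : X, cycComp σ f i r y = y := by
  constructor
  · rintro ⟨x, hx⟩ i r _ hσr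
    have hx' : ∀ i, f i (x i) = x (σ i) := by
      intro i
      have := congrFun hx (σ i)
      simpa [twistedProd] using this
    exact ⟨x i, by rw [cycComp_fixed_aux σ f x hx' i r, hσr]⟩
  · intro h
    classical
    -- representative of the cycle of `j`
    have hmem : ∀ j : Fin n, j ∈ Finset.univ.filter (fun i => σ.SameCycle i j) := by
      intro j; simp [Equiv.Perm.SameCycle.refl]
    set rep : Fin n → Fin n := fun j =>
      (Finset.univ.filter (fun i => σ.SameCycle i j)).min' ⟨j, hmem j⟩ with hrep_def
    have hrepS : ∀ j, σ.SameCycle (rep j) j := by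
      intro j
      have := Finset.min'_mem (Finset.univ.filter (fun i => σ.SameCycle i j)) ⟨j, hmem j⟩
      simpa [hrep_def] using this
    have hrep_apply : ∀ j, rep (σ j) = rep j := by
      intro j
      have : (Finset.univ.filter (fun i => σ.SameCycle i (σ j))) =
          (Finset.univ.filter (fun i => σ.SameCycle i j)) := by
        apply Finset.filter_congr
        intro i _
        simp [Equiv.Perm.sameCycle_apply_right]
      simp [hrep_def, this]
    have hex : ∀ j : Fin n, ∃ k : ℕ, (σ ^ k) (rep j) = j := by
      intro j
      obtain ⟨k, _, hk⟩ := (hrepS j).exists_pow_eq'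
      exact ⟨k, hk⟩
    set k : Fin n → ℕ := fun j => Nat.find (hex j) with hk_def
    have hk : ∀ j, (σ ^ k j) (rep j) = j := fun j => Nat.find_spec (hex j)
    have hper : ∀ ρ : Fin n, ∃ r : ℕ, (σ ^ (r + 1)) ρ = ρ := by
      intro ρ
      refine ⟨orderOf σ - 1, ?_⟩
      have h1 : 0 < orderOf σ := orderOf_pos σ
      have : orderOf σ - 1 + 1 = orderOf σ := by omega
      rw [this, pow_orderOf_eq_one]; rfl
    set per : Fin n → ℕ := fun ρ => Nat.find (hper ρ) + 1 with hper_def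
    have hper_spec : ∀ ρ, (σ ^ per ρ) ρ = ρ := fun ρ => Nat.find_spec (hper ρ)
    set y : Fin n → X := fun ρ => Classical.choose
      (h ρ (per ρ) (Nat.le_add_left 1 _) (hper_spec ρ)) with hy_def
    have hy : ∀ ρ, cycComp σ f ρ (per ρ) (y ρ) = y ρ := fun ρ =>
      Classical.choose_spec (h ρ (per ρ) (Nat.le_add_left 1 _) (hper_spec ρ))
    set x : Fin n → X := fun j => cycComp σ f (rep j) (k j) (y (rep j)) with hx_def
    have key : ∀ j : Fin n, f j (x j) = x (σ j) := by
      intro j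
      set ρ := rep j with hρ
      set a := k j with ha
      have hfj : f j (x j) = cycComp σ f ρ (a + 1) (y ρ) := by
        have : f j (x j) = f ((σ ^ a) ρ) (cycComp σ f ρ a (y ρ)) := by
          rw [hk j]
        rw [this]; rfl
      by_cases hcase : σ j = ρ
      · -- wrap-around
        have hk0 : k (σ j) = 0 := by
          rw [hk_def]
          rw [Nat.find_eq_zero]
          rw [hrep_apply j, ← hρ, pow_zero]
          exact hcase.symm
        have hxσj : x (σ j) = y ρ := by
          rw [hx_def]
          simp only [hk0, hrep_apply j, ← hρ]
          rfl
        -- a + 1 = per ρ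
        have hp1 : (σ ^ (a + 1)) ρ = ρ := by
          rw [pow_succ', Equiv.Perm.mul_apply, hk j, hcase]
        have hle : Nat.find (hper ρ) ≤ a := Nat.find_le hp1
        have hge : a ≤ Nat.find (hper ρ) := by
          by_contra hlt
          push_neg at hlt
          set p := Nat.find (hper ρ) with hp
          have hpspec : (σ ^ (p + 1)) ρ = ρ := Nat.find_spec (hper ρ)
          have hsmall : (σ ^ (a - (p + 1))) (rep j) = j := by
            have : a = (a - (p + 1)) + (p + 1) := by omega
            have h2 : (σ ^ a) ρ = (σ ^ (a - (p + 1))) ((σ ^ (p + 1)) ρ) := by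
              conv_lhs => rw [this, pow_add, Equiv.Perm.mul_apply]
            rw [hpspec] at h2
            rw [← hρ, ← h2, hρ]
            exact hk j
          have hlt2 : a - (p + 1) < a := by omega
          exact Nat.find_min (hex j) hlt2 hsmall
        have haper : a + 1 = per ρ := by
          have h3 : per ρ = Nat.find (hper ρ) + 1 := rfl
          omega
        rw [hfj, haper, hy ρ, hxσj]
      · -- generic step
        have hkb : k (σ j) = a + 1 := by
          have hub : k (σ j) ≤ a + 1 := by
            apply Nat.find_le
            rw [hrep_apply j, ← hρ, pow_succ', Equiv.Perm.mul_apply, hk j]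
          have hlb : a + 1 ≤ k (σ j) := by
            rcases Nat.eq_zero_or_pos (k (σ j)) with h0 | hpos
            · exfalso
              have := hk (σ j)
              rw [h0, pow_zero, hrep_apply j, ← hρ] at this
              exact hcase this.symm
            · obtain ⟨c, hc⟩ : ∃ c, k (σ j) = c + 1 := ⟨k (σ j) - 1, by omega⟩
              have := hk (σ j)
              rw [hc, hrep_apply j, ← hρ, pow_succ', Equiv.Perm.mul_apply] at this
              have hcj : (σ ^ c) ρ = j := σ.injective this
              have : a ≤ c := Nat.find_le hcj
              omega
          omega
        have : x (σ j) = cycComp σ f ρ (a + 1) (y ρ) := by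
          rw [hx_def]
          simp only [hkb, hrep_apply j, ← hρ]
        rw [hfj, this]
    refine ⟨x, funext fun j => ?_⟩
    have := key (σ⁻¹ j)
    simpa [twistedProd] using this
end

section
/- Let X be a type, n a natural number, σ a permutation of Fin n, f : Fin n → X → X, and F the σ-twisted product of f. Suppose F^m = id for some integer m ≥ 1. Then for every i : Fin n and every integer r ≥ 1 with σ^r i = i, the cycle composition at i of length r, iterated m times, is the identity map of X. -/
lemma twistedProd_iterate_apply {X : Type*} {n : ℕ} (σ : Equiv.Perm (Fin n))
    (f : Fin n → X → X) (i : Fin n) :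
    ∀ (k : ℕ) (x : Fin n → X),
      (twistedProd σ f)^[k] x ((σ ^ k) i) = cycComp σ f i k (x i) := by
  intro k
  induction k with
  | zero => intro x; simp [cycComp]
  | succ k ih =>
      intro x
      rw [Function.iterate_succ_apply']
      have h1 : σ⁻¹ ((σ ^ (k + 1)) i) = (σ ^ k) i := by
        have : (σ ^ (k + 1)) i = σ ((σ ^ k) i) := by
          rw [pow_succ']
          simp [Equiv.Perm.mul_apply]
        rw [this]; simp
      simp only [twistedProd, h1, ih x, cycComp, Function.comp_apply]

theorem cycComp_iterate_eq_id_of_twistedProd_iterate_eq_id {X : Type*} {n : ℕ}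
    (σ : Equiv.Perm (Fin n)) (f : Fin n → X → X) (m : ℕ) (hm : 1 ≤ m)
    (hF : (twistedProd σ f)^[m] = id) :
    ∀ (i : Fin n) (r : ℕ), 1 ≤ r → (σ ^ r) i = i →
      (cycComp σ f i r)^[m] = id := by
  intro i r hr hσ
  funext a
  have key : ∀ (j : ℕ) (x : Fin n → X),
      (twistedProd σ f)^[j * r] x i = (cycComp σ f i r)^[j] (x i) := by
    intro j
    induction j with
    | zero => intro x; simp
    | succ j ih =>
        intro x
        have he : (j + 1) * r = j * r + r := by ring
        rw [he, Function.iterate_add_apply, ih,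
          Function.iterate_succ_apply]
        congr 1
        have := twistedProd_iterate_apply σ f i r x
        rwa [hσ] at this
  have h2 : (twistedProd σ f)^[m * r] = id := by
    rw [Function.iterate_mul, hF]
    simp
  have := key m (fun _ => a)
  rw [h2] at this
  simpa using this.symm
end

section
/- Let X be a type, n a natural number, σ a permutation of Fin n, f : Fin n → X → X, and F the σ-twisted product of f. Suppose F has no fixed point and F^m = id for some integer m ≥ 1. Then there exist i : Fin n and an integer r ≥ 1 with σ^r i = i such that the cycle composition l at i of length r is a fixed-point-free self-map of X satisfying l^m = id. -/
section Aux

variable {X : Type*} {n : ℕ} (σ : Equiv.Perm (Fin n)) (f : Fin n → X → X)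

lemma twistedProd_apply_sigma (x : Fin n → X) (i : Fin n) :
    twistedProd σ f x (σ i) = f i (x i) := by
  simp [twistedProd]

lemma iterate_twistedProd (k : ℕ) (x : Fin n → X) (i : Fin n) :
    (twistedProd σ f)^[k] x ((σ ^ k) i) = cycComp σ f i k (x i) := by
  induction k with
  | zero => simp [cycComp]
  | succ k ih =>
    have hp : (σ ^ (k + 1)) i = σ ((σ ^ k) i) := by
      rw [pow_succ']; rfl
    rw [Function.iterate_succ_apply', hp, twistedProd_apply_sigma, ih]
    rfl

lemma cycComp_add (i : Fin n) (a b : ℕ) :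
    cycComp σ f i (a + b) = cycComp σ f ((σ ^ a) i) b ∘ cycComp σ f i a := by
  induction b with
  | zero => simp [cycComp]
  | succ b ih =>
    have hp : (σ ^ (a + b)) i = (σ ^ b) ((σ ^ a) i) := by
      rw [add_comm, pow_add]; rfl
    show cycComp σ f i (a + b + 1) = _
    rw [show a + b + 1 = (a + b) + 1 from rfl]
    simp only [cycComp, ih, hp]
    rfl

lemma pow_mul_apply_fix (i : Fin n) {r : ℕ} (h : (σ ^ r) i = i) (t : ℕ) :
    (σ ^ (r * t)) i = i := by
  induction t with
  | zero => simp
  | succ t ih =>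
    rw [Nat.mul_succ, pow_add, Equiv.Perm.mul_apply, h, ih]

lemma cycComp_mul (i : Fin n) {r : ℕ} (h : (σ ^ r) i = i) (t : ℕ) :
    cycComp σ f i (r * t) = (cycComp σ f i r)^[t] := by
  induction t with
  | zero => simp [cycComp]
  | succ t ih =>
    have : r * (t + 1) = r * t + r := by ring
    rw [this, cycComp_add, pow_mul_apply_fix σ i h, ih,
      Function.iterate_succ']

/-- If the twisted product satisfies `F^[m] = id`, then any cycle composition whose
length `r` satisfies `σ^r i = i` also satisfies `l^[m] = id`. -/
lemma cycComp_iterate_eq_id (i : Fin n) {r : ℕ} (h : (σ ^ r) i = i)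
    {m : ℕ} (hF : (twistedProd σ f)^[m] = id) :
    (cycComp σ f i r)^[m] = id := by
  have hid : (twistedProd σ f)^[r * m] = id := by
    rw [mul_comm, Function.iterate_mul, hF, Function.iterate_id]
  rw [← cycComp_mul σ f i h]
  funext y
  have := iterate_twistedProd σ f (r * m) (fun _ => y) i
  rw [hid, pow_mul_apply_fix σ i h] at this
  exact this.symm

/-- Reduction of the exponent of `cycComp` modulo a period, on a fixed point. -/
lemma cycComp_mod (i : Fin n) {d : ℕ} (h : (σ ^ d) i = i) {y : X}
    (hy : cycComp σ f i d y = y) (e : ℕ) :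
    cycComp σ f i e y = cycComp σ f i (e % d) y := by
  conv_lhs => rw [show e = d * (e / d) + e % d from (Nat.div_add_mod e d).symm]
  rw [cycComp_add, pow_mul_apply_fix σ i h, Function.comp_apply,
    cycComp_mul σ f i h]
  congr 1
  exact Function.IsFixedPt.iterate hy _

end Aux

theorem exists_fixed_point_free_cycComp {X : Type*} {n : ℕ}
    (σ : Equiv.Perm (Fin n)) (f : Fin n → X → X)
    (hfree : ∀ x : Fin n → X, twistedProd σ f x ≠ x)
    (m : ℕ) (hm : 1 ≤ m) (hF : (twistedProd σ f)^[m] = id) :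
    ∃ (i : Fin n) (r : ℕ), 1 ≤ r ∧ (σ ^ r) i = i ∧
      (∀ y : X, cycComp σ f i r y ≠ y) ∧ (cycComp σ f i r)^[m] = id := by
  have key : ∃ (i : Fin n) (r : ℕ), 1 ≤ r ∧ (σ ^ r) i = i ∧
      ∀ y : X, cycComp σ f i r y ≠ y := by
    by_contra hcon
    push_neg at hcon
    -- minimal periods
    set d : Fin n → ℕ := fun a => Function.minimalPeriod σ a with hd
    have hdpos : ∀ a, 0 < d a := by
      intro a
      refine Function.IsPeriodicPt.minimalPeriod_pos (orderOf_pos σ) ?_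
      show σ^[orderOf σ] a = a
      rw [Equiv.Perm.iterate_eq_pow, pow_orderOf_eq_one]; rfl
    have hdfix : ∀ a, (σ ^ d a) a = a := by
      intro a
      have := Function.isPeriodicPt_minimalPeriod σ a
      rwa [Function.IsPeriodicPt, Function.IsFixedPt,
        Equiv.Perm.iterate_eq_pow] at this
    -- chosen fixed points of the cycle compositions
    have hy : ∀ a, ∃ y : X, cycComp σ f a (d a) y = y := by
      intro a
      obtain ⟨y, hy⟩ := hcon a (d a) (hdpos a) (hdfix a)
      exact ⟨y, hy⟩
    choose y hy using hy
    -- orbit representatives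
    have hne : ∀ j : Fin n, (Finset.univ.filter (fun b => σ.SameCycle b j)).Nonempty :=
      fun j => ⟨j, by simp [Equiv.Perm.SameCycle.refl]⟩
    set rep : Fin n → Fin n :=
      fun j => (Finset.univ.filter (fun b => σ.SameCycle b j)).min' (hne j) with hrepdef
    have hrep : ∀ j, σ.SameCycle (rep j) j := by
      intro j
      have := Finset.min'_mem _ (hne j)
      simpa using this
    have hrepσ : ∀ j, rep (σ j) = rep j := by
      intro j
      have hset : (Finset.univ.filter (fun b => σ.SameCycle b (σ j)))
          = Finset.univ.filter (fun b => σ.SameCycle b j) := by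
        apply Finset.filter_congr
        intro b _
        simp [Equiv.Perm.sameCycle_apply_right]
      simp only [hrepdef]
      congr 1
    -- counts: j = σ^(cnt j) (rep j)
    have hex : ∀ j : Fin n, ∃ k : ℕ, (σ ^ k) (rep j) = j := by
      intro j
      obtain ⟨k, -, hk⟩ := (hrep j).exists_pow_eq'
      exact ⟨k, hk⟩
    choose cnt hcnt using hex
    -- the glued fixed point of the twisted product
    set x : Fin n → X := fun j => cycComp σ f (rep j) (cnt j) (y (rep j)) with hx
    apply hfree x
    funext j'
    obtain ⟨j, rfl⟩ : ∃ j, j' = σ j := ⟨σ⁻¹ j', by simp⟩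
    rw [twistedProd_apply_sigma]
    -- goal : f j (x j) = x (σ j)
    have e1 : rep (σ j) = rep j := hrepσ j
    set a := rep j with ha
    have hk1 : (σ ^ cnt j) a = j := hcnt j
    have hk2 : (σ ^ cnt (σ j)) a = σ j := by
      have := hcnt (σ j); rwa [e1] at this
    have lhs_eq : f j (x j) = cycComp σ f a (cnt j + 1) (y a) := by
      show f j (cycComp σ f a (cnt j) (y a)) =
        f ((σ ^ cnt j) a) (cycComp σ f a (cnt j) (y a))
      rw [hk1]
    have rhs_eq : x (σ j) = cycComp σ f a (cnt (σ j)) (y a) := by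
      show cycComp σ f (rep (σ j)) (cnt (σ j)) (y (rep (σ j))) = _
      rw [e1]
    rw [lhs_eq, rhs_eq]
    -- both exponents agree modulo the minimal period of `a`
    have hmod : (cnt j + 1) % d a = cnt (σ j) % d a := by
      have hiter : σ^[(cnt j + 1) % d a] a = σ^[cnt (σ j) % d a] a := by
        rw [Function.iterate_mod_minimalPeriod_eq,
          Function.iterate_mod_minimalPeriod_eq]
        show (σ ^ (cnt j + 1)) a = (σ ^ cnt (σ j)) a
        rw [hk2, pow_succ', Equiv.Perm.mul_apply, hk1]
      exact Function.iterate_injOn_Iio_minimalPeriod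
        (Nat.mod_lt _ (hdpos a)) (Nat.mod_lt _ (hdpos a)) hiter
    rw [cycComp_mod σ f a (hdfix a) (hy a), hmod,
      ← cycComp_mod σ f a (hdfix a) (hy a)]
  obtain ⟨i, r, hr1, hri, hfp⟩ := key
  exact ⟨i, r, hr1, hri, hfp, cycComp_iterate_eq_id σ f i hri hF⟩
end

section
/- Let g ≥ 1 be a natural number and α : Fin g → ℂ a family of complex numbers such that each α j is non-real, α is injective, and α i ≠ conj(α j) for all i, j. Then the 2g vectors v_k ∈ ℂ^g defined by v_k = (α 0 ^ k, α 1 ^ k, …, α (g−1) ^ k), for k = 0, 1, …, 2g − 1, are linearly independent over ℝ (viewing ℂ^g = Fin g → ℂ as a real vector space). -/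
open Polynomial

theorem linearIndependent_powers_of_nonreal_roots
    (g : ℕ) (hg : 1 ≤ g) (α : Fin g → ℂ)
    (hnonreal : ∀ j, (α j).im ≠ 0)
    (hinj : Function.Injective α)
    (hconj : ∀ i j, α i ≠ (starRingEnd ℂ) (α j)) :
    LinearIndependent ℝ
      (fun k : Fin (2 * g) => fun j : Fin g => α j ^ (k : ℕ)) := by
  rw [Fintype.linearIndependent_iff]
  intro c hc k
  -- build polynomial with real coefficients
  set p : ℂ[X] := ∑ i : Fin (2 * g), C ((c i : ℂ)) * X ^ (i : ℕ) with hp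
  have heval : ∀ j : Fin g, p.eval (α j) = 0 := by
    intro j
    have := congrFun hc j
    simpa [p, eval_finset_sum, Pi.smul_apply, Complex.real_smul] using this
  have hevalc : ∀ j : Fin g, p.eval ((starRingEnd ℂ) (α j)) = 0 := by
    intro j
    have h0 : (starRingEnd ℂ) (p.eval (α j)) = 0 := by rw [heval j]; simp
    rw [← h0]
    simp [p, eval_finset_sum, map_sum, map_mul, map_pow]
  -- the 2g roots
  set β : Fin g ⊕ Fin g → ℂ := Sum.elim α (fun j => (starRingEnd ℂ) (α j)) with hβ
  have hβinj : Function.Injective β := by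
    rintro (i | i) (j | j) h
    · rw [hinj (show α i = α j by simpa [β] using h)]
    · exact absurd (by simpa [β] using h) (hconj i j)
    · exact absurd (by simpa [β] using h.symm) (hconj j i)
    · have h' : (starRingEnd ℂ) (α i) = (starRingEnd ℂ) (α j) := by simpa [β] using h
      rw [hinj ((starRingEnd ℂ).injective h')]
  have hβeval : ∀ i, p.eval (β i) = 0 := by
    rintro (i | i)
    · exact heval i
    · exact hevalc i
  have hdeg : p.natDegree < Fintype.card (Fin g ⊕ Fin g) := by
    have h1 : p.natDegree ≤ 2 * g - 1 := by
      apply natDegree_sum_le_of_forall_le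
      intro i _
      refine (natDegree_C_mul_X_pow_le _ _).trans ?_
      have := i.2; omega
    have h2 : Fintype.card (Fin g ⊕ Fin g) = 2 * g := by simp [Fintype.card_sum]; ring
    omega
  have hp0 : p = 0 := eq_zero_of_natDegree_lt_card_of_eval_eq_zero p hβinj hβeval hdeg
  have hcoeff : p.coeff (k : ℕ) = (c k : ℂ) := by
    rw [hp, finset_sum_coeff]
    rw [Finset.sum_eq_single k]
    · simp
    · intro i _ hik
      have : (i : ℕ) ≠ (k : ℕ) := fun h => hik (Fin.ext h)
      simp [coeff_C_mul, coeff_X_pow, this, Ne.symm this]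
    · simp
  rw [hp0, coeff_zero] at hcoeff
  exact_mod_cast hcoeff.symm
end
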